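/- arXiv:1810.09663 — 4 statements merged into one kernel-verified Lean document; each statement's English description precedes it below -/
import Mathlib

section
/- In the four-node ADT deterministic two-way function-multicast network, every achievable rate pair (R,R̃) satisfies the cut-set bounds R + R̃ ≤ m + m̃ and R + R̃ ≤ n + ñ. -/
open Matrix Filter

namespace TwoWay

/-- The `q × q` shift matrix over `𝔽₂`: entry `(i,j)` is `1` iff `i = j + 1`. -/
def shiftG (q : ℕ) : Matrix (Fin q) (Fin q) (ZMod 2) :=
  Matrix.of fun i j => if (i : ℕ) = (j : ℕ) + 1 then 1 else 0

/-- Outputs of a symmetric ADT deterministic channel pair with direct-link level `n`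
and cross-link level `m`: given inputs `x₁, x₂ ∈ 𝔽₂^{max m n}` it returns
`(Y₁, Y₂) = (G^{q-n} x₁ + G^{q-m} x₂, G^{q-m} x₁ + G^{q-n} x₂)` where `q = max m n`. -/
def chOut (m n : ℕ) (x1 x2 : Fin (max m n) → ZMod 2) :
    (Fin (max m n) → ZMod 2) × (Fin (max m n) → ZMod 2) :=
  (shiftG (max m n) ^ (max m n - n) *ᵥ x1 + shiftG (max m n) ^ (max m n - m) *ᵥ x2,
   shiftG (max m n) ^ (max m n - m) *ᵥ x1 + shiftG (max m n) ^ (max m n - n) *ᵥ x2)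

/-- A code of block length `N` for the four-node ADT deterministic two-way
function-multicast network with forward parameters `(m, n)` and backward
parameters `(mt, nt)`.  Nodes `1, 2` carry forward sources of length `K`
(encoders `f1, f2`, taking the node's own source and its past received backward
signals); nodes `1̃, 2̃` carry backward sources of length `Kt` (encoders
`ft1, ft2`).  `dect1, dect2` are the decoders at nodes `1̃, 2̃` for the forward
modulo-2 sum, and `dec1, dec2` the decoders at nodes `1, 2` for the backward
modulo-2 sum. -/
structure Code (m n mt nt : ℕ) where
  N : ℕ
  Npos : 0 < N
  K : ℕ
  Kt : ℕ
  f1 : (i : ℕ) → (Fin K → ZMod 2) → (Fin i → (Fin (max mt nt) → ZMod 2)) →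
    (Fin (max m n) → ZMod 2)
  f2 : (i : ℕ) → (Fin K → ZMod 2) → (Fin i → (Fin (max mt nt) → ZMod 2)) →
    (Fin (max m n) → ZMod 2)
  ft1 : (i : ℕ) → (Fin Kt → ZMod 2) → (Fin i → (Fin (max m n) → ZMod 2)) →
    (Fin (max mt nt) → ZMod 2)
  ft2 : (i : ℕ) → (Fin Kt → ZMod 2) → (Fin i → (Fin (max m n) → ZMod 2)) →
    (Fin (max mt nt) → ZMod 2)
  dec1 : (Fin N → (Fin (max mt nt) → ZMod 2)) → (Fin Kt → ZMod 2)
  dec2 : (Fin N → (Fin (max mt nt) → ZMod 2)) → (Fin Kt → ZMod 2)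
  dect1 : (Fin N → (Fin (max m n) → ZMod 2)) → (Fin K → ZMod 2)
  dect2 : (Fin N → (Fin (max m n) → ZMod 2)) → (Fin K → ZMod 2)

variable {m n mt nt : ℕ}

/-- The tuple of transmitted signals `(X₁ᵢ, X₂ᵢ, X̃₁ᵢ, X̃₂ᵢ)` at one time instant. -/
abbrev Sig (m n mt nt : ℕ) : Type :=
  (Fin (max m n) → ZMod 2) × (Fin (max m n) → ZMod 2) ×
  (Fin (max mt nt) → ZMod 2) × (Fin (max mt nt) → ZMod 2)

/-- One time step: the four encoders applied to the sources and the past received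
signals determined by the history `h` of transmitted signals.  Node `k`'s encoder
sees `Ỹ_k^{i-1}` and node `k̃`'s encoder sees `Y_k^{i-1}`. -/
def step (C : Code m n mt nt) (s1 s2 : Fin C.K → ZMod 2) (t1 t2 : Fin C.Kt → ZMod 2)
    (i : ℕ) (h : Fin i → Sig m n mt nt) : Sig m n mt nt :=
  (C.f1 i s1 (fun j => (chOut mt nt (h j).2.2.1 (h j).2.2.2).1),
   C.f2 i s2 (fun j => (chOut mt nt (h j).2.2.1 (h j).2.2.2).2),
   C.ft1 i t1 (fun j => (chOut m n (h j).1 (h j).2.1).1),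
   C.ft2 i t2 (fun j => (chOut m n (h j).1 (h j).2.1).2))

/-- The history of transmitted signals up to (exclusive) time `i`, determined by
the sources. -/
def hist (C : Code m n mt nt) (s1 s2 : Fin C.K → ZMod 2) (t1 t2 : Fin C.Kt → ZMod 2) :
    (i : ℕ) → Fin i → Sig m n mt nt
  | 0 => Fin.elim0
  | i + 1 => Fin.snoc (hist C s1 s2 t1 t2 i) (step C s1 s2 t1 t2 i (hist C s1 s2 t1 t2 i))

/-- Node `1̃`'s received sequence `Y₁^N`. -/
def recvF1 (C : Code m n mt nt) (s1 s2 : Fin C.K → ZMod 2) (t1 t2 : Fin C.Kt → ZMod 2) :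
    Fin C.N → Fin (max m n) → ZMod 2 :=
  fun i => (chOut m n (hist C s1 s2 t1 t2 C.N i).1 (hist C s1 s2 t1 t2 C.N i).2.1).1

/-- Node `2̃`'s received sequence `Y₂^N`. -/
def recvF2 (C : Code m n mt nt) (s1 s2 : Fin C.K → ZMod 2) (t1 t2 : Fin C.Kt → ZMod 2) :
    Fin C.N → Fin (max m n) → ZMod 2 :=
  fun i => (chOut m n (hist C s1 s2 t1 t2 C.N i).1 (hist C s1 s2 t1 t2 C.N i).2.1).2

/-- Node `1`'s received sequence `Ỹ₁^N`. -/
def recvB1 (C : Code m n mt nt) (s1 s2 : Fin C.K → ZMod 2) (t1 t2 : Fin C.Kt → ZMod 2) :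
    Fin C.N → Fin (max mt nt) → ZMod 2 :=
  fun i => (chOut mt nt (hist C s1 s2 t1 t2 C.N i).2.2.1 (hist C s1 s2 t1 t2 C.N i).2.2.2).1

/-- Node `2`'s received sequence `Ỹ₂^N`. -/
def recvB2 (C : Code m n mt nt) (s1 s2 : Fin C.K → ZMod 2) (t1 t2 : Fin C.Kt → ZMod 2) :
    Fin C.N → Fin (max mt nt) → ZMod 2 :=
  fun i => (chOut mt nt (hist C s1 s2 t1 t2 C.N i).2.2.1 (hist C s1 s2 t1 t2 C.N i).2.2.2).2

/-- The space of source realizations `(S₁^K, S₂^K, S̃₁^K̃, S̃₂^K̃)`;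
the sources are i.i.d. Bernoulli(1/2), i.e. uniform on this finite space. -/
abbrev SrcSpace (C : Code m n mt nt) : Type :=
  (Fin C.K → ZMod 2) × (Fin C.K → ZMod 2) × (Fin C.Kt → ZMod 2) × (Fin C.Kt → ZMod 2)

-- Probability of an event under the uniform (i.i.d. Bernoulli(1/2)) source
-- distribution.
open Classical in
noncomputable def probOf (C : Code m n mt nt) (E : SrcSpace C → Prop) : ℝ :=
  ((Finset.univ.filter E).card : ℝ) / (Fintype.card (SrcSpace C) : ℝ)

/-- Decoding error probability at node `1̃` (forward modulo-2 sum). -/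
noncomputable def errF1 (C : Code m n mt nt) : ℝ :=
  probOf C fun ω =>
    C.dect1 (recvF1 C ω.1 ω.2.1 ω.2.2.1 ω.2.2.2) ≠ fun k => ω.1 k + ω.2.1 k

/-- Decoding error probability at node `2̃` (forward modulo-2 sum). -/
noncomputable def errF2 (C : Code m n mt nt) : ℝ :=
  probOf C fun ω =>
    C.dect2 (recvF2 C ω.1 ω.2.1 ω.2.2.1 ω.2.2.2) ≠ fun k => ω.1 k + ω.2.1 k

/-- Decoding error probability at node `1` (backward modulo-2 sum). -/
noncomputable def errB1 (C : Code m n mt nt) : ℝ :=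
  probOf C fun ω =>
    C.dec1 (recvB1 C ω.1 ω.2.1 ω.2.2.1 ω.2.2.2) ≠ fun k => ω.2.2.1 k + ω.2.2.2 k

/-- Decoding error probability at node `2` (backward modulo-2 sum). -/
noncomputable def errB2 (C : Code m n mt nt) : ℝ :=
  probOf C fun ω =>
    C.dec2 (recvB2 C ω.1 ω.2.1 ω.2.2.1 ω.2.2.2) ≠ fun k => ω.2.2.1 k + ω.2.2.2 k

/-- A rate pair `(R, R̃) = (K/N, K̃/N)` is achievable if there is a family of codes
whose block lengths tend to infinity and whose four decoding error probabilities
tend to `0`. -/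
def Achievable (m n mt nt : ℕ) (R Rt : ℝ) : Prop :=
  ∃ Cs : ℕ → Code m n mt nt,
    Tendsto (fun ν => (Cs ν).N) atTop atTop ∧
    (∀ ν, ((Cs ν).K : ℝ) / ((Cs ν).N : ℝ) = R) ∧
    (∀ ν, ((Cs ν).Kt : ℝ) / ((Cs ν).N : ℝ) = Rt) ∧
    Tendsto (fun ν => errF1 (Cs ν)) atTop (nhds 0) ∧
    Tendsto (fun ν => errF2 (Cs ν)) atTop (nhds 0) ∧
    Tendsto (fun ν => errB1 (Cs ν)) atTop (nhds 0) ∧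
    Tendsto (fun ν => errB2 (Cs ν)) atTop (nhds 0)

/-- The computation capacity region: the closure of the set of achievable rate pairs. -/
def CapacityRegion (m n mt nt : ℕ) : Set (ℝ × ℝ) :=
  closure {p : ℝ × ℝ | Achievable m n mt nt p.1 p.2}

/-- The perfect-feedback computation capacity: `n` if `m = n`, and
`(2/3) max(m,n)` otherwise (i.e. `(2/3)n` if `m < n` and `(2/3)m` if `m > n`). -/
noncomputable def Cpf (m n : ℕ) : ℝ :=
  if m = n then (n : ℝ) else (2 / 3) * (max m n : ℝ)

end TwoWay

/-!
Cut-set argument. Take the cut `{1, 1̃} | {2, 2̃}`. Everything that crosses it over a block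
is the top `m` levels of `X₂` and the top `m̃` levels of `X̃₂` at each time, since the shift
`G^{q-m}` discards the rest; by induction on time, these crossing signals together with
`(S₁, S̃₁)` determine all signals transmitted and received on the left side. Where nodes
`1̃` and `1` both decode correctly they recover `S₁ ⊕ S₂` and `S̃₁ ⊕ S̃₂`, hence `S₂` and `S̃₂`.
So the success event injects into a set of size `2^{K+K̃} 2^{N(m+m̃)}`, while the sources are
uniform on `2^{2(K+K̃)}` points; letting the error probabilities tend to `0` gives
`R + R̃ ≤ m + m̃`. The cut `{1, 2̃} | {2, 1̃}` gives `R + R̃ ≤ n + ñ` in the same way.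
-/

lemma le_of_one_sub_mul_two_pow_le {N K : ℕ → ℕ} {e : ℕ → ℝ} {r : ℝ} {a : ℕ}
    (hN : Tendsto N atTop atTop) (hr : ∀ ν, (K ν : ℝ) / N ν = r)
    (he : Tendsto e atTop (nhds 0)) (hb : ∀ ν, (1 - e ν) * 2 ^ K ν ≤ 2 ^ (N ν * a)) :
    r ≤ a := by
  have hr_le : ∀ᶠ ν in atTop, r ≤ a + 1 / (N ν : ℝ) := by
    filter_upwards [he.eventually (gt_mem_nhds one_half_pos), hN.eventually_gt_atTop 0]
      with ν he_lt hN_pos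
    have h2 : (2 : ℝ) ^ K ν ≤ 2 ^ (N ν * a + 1) := by
      rw [pow_succ]
      nlinarith [hb ν, pow_pos (zero_lt_two (α := ℝ)) (K ν)]
    have hK : (K ν : ℝ) ≤ N ν * a + 1 := by
      exact_mod_cast (pow_le_pow_iff_right₀ one_lt_two).1 h2
    rw [← hr ν, div_le_iff₀ (by positivity), add_mul, one_div_mul_cancel (by positivity)]
    linarith
  have hlim : Tendsto (fun ν => (a : ℝ) + 1 / (N ν : ℝ)) atTop (nhds (a + 0)) :=
    tendsto_const_nhds.add (tendsto_one_div_atTop_nhds_zero_nat.comp hN)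
  simpa using ge_of_tendsto hlim hr_le

namespace TwoWay

variable {m n mt nt : ℕ}

section Shift

variable {q : ℕ}

lemma shiftG_mulVec_apply (x : Fin q → ZMod 2) (i : Fin q) :
    (shiftG q *ᵥ x) i = if h : 1 ≤ (i : ℕ) then x ⟨i - 1, by omega⟩ else 0 := by
  simp only [shiftG, mulVec, dotProduct, of_apply, ite_mul, one_mul, zero_mul]
  split_ifs with h
  · have hj : ∀ j : Fin q, (i : ℕ) = j + 1 ↔ j = ⟨i - 1, by omega⟩ := fun j => by
      simp only [Fin.ext_iff]; omega
    simp only [hj, Finset.sum_ite_eq', Finset.mem_univ, if_true]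
  · exact Finset.sum_eq_zero fun j _ => if_neg (by omega)

lemma shiftG_pow_mulVec_apply (k : ℕ) (x : Fin q → ZMod 2) (i : Fin q) :
    (shiftG q ^ k *ᵥ x) i = if h : k ≤ (i : ℕ) then x ⟨i - k, by omega⟩ else 0 := by
  induction k generalizing i with
  | zero => simp
  | succ k ih =>
    rw [pow_succ', ← mulVec_mulVec, shiftG_mulVec_apply]
    by_cases h : 1 ≤ (i : ℕ)
    · rw [dif_pos h, ih]
      simp only [Nat.sub_sub, Nat.add_comm 1 k]
      split_ifs <;> first | rfl | omega
    · rw [dif_neg h, dif_neg (by omega)]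

lemma shiftG_pow_sub_mulVec_congr {k : ℕ} {x x' : Fin q → ZMod 2}
    (h : Set.EqOn x x' {j | (j : ℕ) < k}) :
    shiftG q ^ (q - k) *ᵥ x = shiftG q ^ (q - k) *ᵥ x' := by
  funext i
  simp only [shiftG_pow_mulVec_apply]
  split_ifs
  · exact h (show i - (q - k) < k by omega)
  · rfl

end Shift

lemma eqOn_lt_of_comp_castLE_eq {α : Type*} {k q : ℕ} (hk : k ≤ q) {x x' : Fin q → α}
    (h : x ∘ Fin.castLE hk = x' ∘ Fin.castLE hk) : Set.EqOn x x' {j | (j : ℕ) < k} :=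
  fun j hj => congrFun h ⟨j, hj⟩

lemma chOut_fst_congr {x₁ x₁' x₂ x₂' : Fin (max m n) → ZMod 2}
    (h₁ : Set.EqOn x₁ x₁' {j | (j : ℕ) < n}) (h₂ : Set.EqOn x₂ x₂' {j | (j : ℕ) < m}) :
    (chOut m n x₁ x₂).1 = (chOut m n x₁' x₂').1 := by
  simp only [chOut, shiftG_pow_sub_mulVec_congr h₁, shiftG_pow_sub_mulVec_congr h₂]

lemma chOut_snd_congr {x₁ x₁' x₂ x₂' : Fin (max m n) → ZMod 2}
    (h₁ : Set.EqOn x₁ x₁' {j | (j : ℕ) < m}) (h₂ : Set.EqOn x₂ x₂' {j | (j : ℕ) < n}) :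
    (chOut m n x₁ x₂).2 = (chOut m n x₁' x₂').2 := by
  simp only [chOut, shiftG_pow_sub_mulVec_congr h₁, shiftG_pow_sub_mulVec_congr h₂]

section Dynamics

variable (C : Code m n mt nt) (s₁ s₂ : Fin C.K → ZMod 2) (t₁ t₂ : Fin C.Kt → ZMod 2)

def sigAt (j : ℕ) : Sig m n mt nt :=
  step C s₁ s₂ t₁ t₂ j (hist C s₁ s₂ t₁ t₂ j)

lemma hist_apply (i : ℕ) (j : Fin i) : hist C s₁ s₂ t₁ t₂ i j = sigAt C s₁ s₂ t₁ t₂ j := by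
  induction i with
  | zero => exact j.elim0
  | succ i ih =>
    induction j using Fin.lastCases with
    | last => simp [hist, sigAt]
    | cast j => simp [hist, ih j]

lemma sigAt_eq (j : ℕ) : sigAt C s₁ s₂ t₁ t₂ j =
    (C.f1 j s₁ fun l : Fin j =>
      (chOut mt nt (sigAt C s₁ s₂ t₁ t₂ l).2.2.1 (sigAt C s₁ s₂ t₁ t₂ l).2.2.2).1,
     C.f2 j s₂ fun l : Fin j =>
      (chOut mt nt (sigAt C s₁ s₂ t₁ t₂ l).2.2.1 (sigAt C s₁ s₂ t₁ t₂ l).2.2.2).2,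
     C.ft1 j t₁ fun l : Fin j =>
      (chOut m n (sigAt C s₁ s₂ t₁ t₂ l).1 (sigAt C s₁ s₂ t₁ t₂ l).2.1).1,
     C.ft2 j t₂ fun l : Fin j =>
      (chOut m n (sigAt C s₁ s₂ t₁ t₂ l).1 (sigAt C s₁ s₂ t₁ t₂ l).2.1).2) := by
  conv_lhs => rw [sigAt, step]
  simp only [hist_apply]

end Dynamics

section Cuts

variable {C : Code m n mt nt} {s₁ s₂ s₂' : Fin C.K → ZMod 2} {t₁ t₂ : Fin C.Kt → ZMod 2}

lemma sigAt_eq_of_cut₁ {t₂' : Fin C.Kt → ZMod 2}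
    (hX₂ : ∀ j < C.N, Set.EqOn (sigAt C s₁ s₂ t₁ t₂ j).2.1 (sigAt C s₁ s₂' t₁ t₂' j).2.1
      {k | (k : ℕ) < m})
    (hXt₂ : ∀ j < C.N, Set.EqOn (sigAt C s₁ s₂ t₁ t₂ j).2.2.2 (sigAt C s₁ s₂' t₁ t₂' j).2.2.2
      {k | (k : ℕ) < mt}) :
    ∀ j < C.N, (sigAt C s₁ s₂ t₁ t₂ j).1 = (sigAt C s₁ s₂' t₁ t₂' j).1 ∧
      (sigAt C s₁ s₂ t₁ t₂ j).2.2.1 = (sigAt C s₁ s₂' t₁ t₂' j).2.2.1 := by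
  intro j
  induction j using Nat.strong_induction_on with
  | _ j ih =>
    intro hj
    have ih' (l : Fin j) := ih l l.2 (l.2.trans hj)
    rw [sigAt_eq, sigAt_eq C s₁ s₂']
    refine ⟨congrArg (C.f1 j s₁) (funext fun l => chOut_fst_congr ?_ (hXt₂ l (l.2.trans hj))),
      congrArg (C.ft1 j t₁) (funext fun l => chOut_fst_congr ?_ (hX₂ l (l.2.trans hj)))⟩
    · exact (ih' l).2 ▸ Set.eqOn_refl _ _
    · exact (ih' l).1 ▸ Set.eqOn_refl _ _

lemma recv_eq_of_cut₁ {t₂' : Fin C.Kt → ZMod 2}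
    (hX₂ : ∀ j < C.N, Set.EqOn (sigAt C s₁ s₂ t₁ t₂ j).2.1 (sigAt C s₁ s₂' t₁ t₂' j).2.1
      {k | (k : ℕ) < m})
    (hXt₂ : ∀ j < C.N, Set.EqOn (sigAt C s₁ s₂ t₁ t₂ j).2.2.2 (sigAt C s₁ s₂' t₁ t₂' j).2.2.2
      {k | (k : ℕ) < mt}) :
    recvF1 C s₁ s₂ t₁ t₂ = recvF1 C s₁ s₂' t₁ t₂' ∧
      recvB1 C s₁ s₂ t₁ t₂ = recvB1 C s₁ s₂' t₁ t₂' := by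
  have hside (i : Fin C.N) := sigAt_eq_of_cut₁ hX₂ hXt₂ i i.2
  refine ⟨funext fun i => ?_, funext fun i => ?_⟩ <;> simp only [recvF1, recvB1, hist_apply]
  · exact chOut_fst_congr ((hside i).1 ▸ Set.eqOn_refl _ _) (hX₂ i i.2)
  · exact chOut_fst_congr ((hside i).2 ▸ Set.eqOn_refl _ _) (hXt₂ i i.2)

lemma sigAt_eq_of_cut₂ {t₁' : Fin C.Kt → ZMod 2}
    (hX₂ : ∀ j < C.N, Set.EqOn (sigAt C s₁ s₂ t₁ t₂ j).2.1 (sigAt C s₁ s₂' t₁' t₂ j).2.1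
      {k | (k : ℕ) < n})
    (hXt₁ : ∀ j < C.N, Set.EqOn (sigAt C s₁ s₂ t₁ t₂ j).2.2.1 (sigAt C s₁ s₂' t₁' t₂ j).2.2.1
      {k | (k : ℕ) < nt}) :
    ∀ j < C.N, (sigAt C s₁ s₂ t₁ t₂ j).1 = (sigAt C s₁ s₂' t₁' t₂ j).1 ∧
      (sigAt C s₁ s₂ t₁ t₂ j).2.2.2 = (sigAt C s₁ s₂' t₁' t₂ j).2.2.2 := by
  intro j
  induction j using Nat.strong_induction_on with
  | _ j ih =>
    intro hj
    have ih' (l : Fin j) := ih l l.2 (l.2.trans hj)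
    rw [sigAt_eq, sigAt_eq C s₁ s₂']
    refine ⟨congrArg (C.f1 j s₁) (funext fun l => chOut_fst_congr (hXt₁ l (l.2.trans hj)) ?_),
      congrArg (C.ft2 j t₂) (funext fun l => chOut_snd_congr ?_ (hX₂ l (l.2.trans hj)))⟩
    · exact (ih' l).2 ▸ Set.eqOn_refl _ _
    · exact (ih' l).1 ▸ Set.eqOn_refl _ _

lemma recv_eq_of_cut₂ {t₁' : Fin C.Kt → ZMod 2}
    (hX₂ : ∀ j < C.N, Set.EqOn (sigAt C s₁ s₂ t₁ t₂ j).2.1 (sigAt C s₁ s₂' t₁' t₂ j).2.1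
      {k | (k : ℕ) < n})
    (hXt₁ : ∀ j < C.N, Set.EqOn (sigAt C s₁ s₂ t₁ t₂ j).2.2.1 (sigAt C s₁ s₂' t₁' t₂ j).2.2.1
      {k | (k : ℕ) < nt}) :
    recvF2 C s₁ s₂ t₁ t₂ = recvF2 C s₁ s₂' t₁' t₂ ∧
      recvB1 C s₁ s₂ t₁ t₂ = recvB1 C s₁ s₂' t₁' t₂ := by
  have hside (i : Fin C.N) := sigAt_eq_of_cut₂ hX₂ hXt₁ i i.2
  refine ⟨funext fun i => ?_, funext fun i => ?_⟩ <;> simp only [recvF2, recvB1, hist_apply]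
  · exact chOut_snd_congr ((hside i).1 ▸ Set.eqOn_refl _ _) (hX₂ i i.2)
  · exact chOut_fst_congr (hXt₁ i i.2) ((hside i).2 ▸ Set.eqOn_refl _ _)

end Cuts

section Probability

variable (C : Code m n mt nt)

lemma one_sub_probOf_not_sub_probOf_not_le (A B : SrcSpace C → Prop) :
    1 - probOf C (fun ω => ¬A ω) - probOf C (fun ω => ¬B ω) ≤
      probOf C fun ω => A ω ∧ B ω := by
  have hpos : (0 : ℝ) < Fintype.card (SrcSpace C) := by exact_mod_cast Fintype.card_pos
  unfold probOf
  rw [sub_sub, ← add_div, sub_le_iff_le_add, ← add_div, one_le_div hpos]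
  norm_cast
  refine (Finset.card_le_card fun ω _ => ?_).trans
    ((Finset.card_union_le _ _).trans (Nat.add_le_add_left (Finset.card_union_le _ _) _))
  simp only [Finset.mem_union, Finset.mem_filter, Finset.mem_univ, true_and]
  tauto

lemma probOf_le_of_injOn {β : Type*} [Fintype β] (E : SrcSpace C → Prop) (F : SrcSpace C → β)
    (hF : Set.InjOn F {ω | E ω}) :
    probOf C E ≤ Fintype.card β / Fintype.card (SrcSpace C) := by
  unfold probOf
  gcongr
  exact_mod_cast Finset.card_le_card_of_injOn F (fun _ _ => Finset.mem_univ _)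
    fun a ha b hb => hF (by simpa using ha) (by simpa using hb)

lemma one_sub_probOf_not_mul_le_of_injOn {a b : ℕ} (A B : SrcSpace C → Prop)
    (F : SrcSpace C →
      (Fin C.K → ZMod 2) × (Fin C.Kt → ZMod 2) × (Fin C.N → (Fin a → ZMod 2) × (Fin b → ZMod 2)))
    (hF : Set.InjOn F {ω | A ω ∧ B ω}) :
    (1 - probOf C (fun ω => ¬A ω) - probOf C (fun ω => ¬B ω)) * 2 ^ (C.K + C.Kt) ≤
      2 ^ (C.N * (a + b)) := by
  have h := (one_sub_probOf_not_sub_probOf_not_le C A B).trans (probOf_le_of_injOn C _ F hF)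
  simp only [Fintype.card_prod, Fintype.card_fun, Fintype.card_fin, ZMod.card] at h
  calc _ ≤ _ := mul_le_mul_of_nonneg_right h (by positivity)
    _ = _ := by
      push_cast
      field_simp
      ring

end Probability

section CutBounds

variable (C : Code m n mt nt)

lemma one_sub_errF1_sub_errB1_mul_le :
    (1 - errF1 C - errB1 C) * 2 ^ (C.K + C.Kt) ≤ 2 ^ (C.N * (m + mt)) := by
  refine one_sub_probOf_not_mul_le_of_injOn C _ _ (fun ω => (ω.1, ω.2.2.1, fun j =>
    ((sigAt C ω.1 ω.2.1 ω.2.2.1 ω.2.2.2 j).2.1 ∘ Fin.castLE (le_max_left m n),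
     (sigAt C ω.1 ω.2.1 ω.2.2.1 ω.2.2.2 j).2.2.2 ∘ Fin.castLE (le_max_left mt nt)))) ?_
  rintro ⟨s₁, s₂, t₁, t₂⟩ ⟨hF, hB⟩ ⟨s₁', s₂', t₁', t₂'⟩ ⟨hF', hB'⟩ heq
  simp only [Prod.mk.injEq] at heq hF hB hF' hB'
  obtain ⟨rfl, rfl, htrace⟩ := heq
  obtain ⟨hY, hYt⟩ := recv_eq_of_cut₁
    (fun j hj => eqOn_lt_of_comp_castLE_eq _ (Prod.mk.inj (congrFun htrace ⟨j, hj⟩)).1)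
    (fun j hj => eqOn_lt_of_comp_castLE_eq _ (Prod.mk.inj (congrFun htrace ⟨j, hj⟩)).2)
  have hs₂ : s₂ = s₂' :=
    add_left_cancel (a := s₁) (hF.symm.trans ((congrArg C.dect1 hY).trans hF'))
  have ht₂ : t₂ = t₂' :=
    add_left_cancel (a := t₁) (hB.symm.trans ((congrArg C.dec1 hYt).trans hB'))
  rw [hs₂, ht₂]

lemma one_sub_errF2_sub_errB1_mul_le :
    (1 - errF2 C - errB1 C) * 2 ^ (C.K + C.Kt) ≤ 2 ^ (C.N * (n + nt)) := by
  refine one_sub_probOf_not_mul_le_of_injOn C _ _ (fun ω => (ω.1, ω.2.2.2, fun j =>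
    ((sigAt C ω.1 ω.2.1 ω.2.2.1 ω.2.2.2 j).2.1 ∘ Fin.castLE (le_max_right m n),
     (sigAt C ω.1 ω.2.1 ω.2.2.1 ω.2.2.2 j).2.2.1 ∘ Fin.castLE (le_max_right mt nt)))) ?_
  rintro ⟨s₁, s₂, t₁, t₂⟩ ⟨hF, hB⟩ ⟨s₁', s₂', t₁', t₂'⟩ ⟨hF', hB'⟩ heq
  simp only [Prod.mk.injEq] at heq hF hB hF' hB'
  obtain ⟨rfl, rfl, htrace⟩ := heq
  obtain ⟨hY, hYt⟩ := recv_eq_of_cut₂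
    (fun j hj => eqOn_lt_of_comp_castLE_eq _ (Prod.mk.inj (congrFun htrace ⟨j, hj⟩)).1)
    (fun j hj => eqOn_lt_of_comp_castLE_eq _ (Prod.mk.inj (congrFun htrace ⟨j, hj⟩)).2)
  have hs₂ : s₂ = s₂' :=
    add_left_cancel (a := s₁) (hF.symm.trans ((congrArg C.dect2 hY).trans hF'))
  have ht₁ : t₁ = t₁' :=
    add_right_cancel (b := t₂) (hB.symm.trans ((congrArg C.dec1 hYt).trans hB'))
  rw [hs₂, ht₁]

end CutBounds

end TwoWay

open TwoWay in
/-- Cut-set bounds: every achievable rate pair `(R, R̃)` satisfies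
`R + R̃ ≤ m + m̃` and `R + R̃ ≤ n + ñ`. -/
theorem achievable_cutset (m n mt nt : ℕ) (R Rt : ℝ)
    (h : Achievable m n mt nt R Rt) :
    R + Rt ≤ (m : ℝ) + (mt : ℝ) ∧ R + Rt ≤ (n : ℝ) + (nt : ℝ) := by
  obtain ⟨Cs, hN, hR, hRt, hF1, hF2, hB1, -⟩ := h
  have hrate (ν : ℕ) : (((Cs ν).K + (Cs ν).Kt : ℕ) : ℝ) / (Cs ν).N = R + Rt := by
    rw [Nat.cast_add, add_div, hR, hRt]
  constructor
  · exact_mod_cast le_of_one_sub_mul_two_pow_le hN hrate (by simpa using hF1.add hB1)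
      fun ν => by simpa [sub_sub] using one_sub_errF1_sub_errB1_mul_le (Cs ν)
  · exact_mod_cast le_of_one_sub_mul_two_pow_le hN hrate (by simpa using hF2.add hB1)
      fun ν => by simpa [sub_sub] using one_sub_errF2_sub_errB1_mul_le (Cs ν)
end

section
/- Let S₁, S₂ be random variables on a finite probability space taking values in 𝔽₂^K, let T̃ and Y₁, Y₂ be random variables with values in finite types, and suppose: (a) S₁ is uniformly distributed on 𝔽₂^K; (b) S₁, S₂, T̃ are mutually independent; (c) S₁ and S₂ are conditionally independent given (Y₁, Y₂, T̃), i.e., the conditional mutual information I(S₁; S₂ | Y₁, Y₂, T̃) = 0. Then I(S₁ ⊕ S₂; Y₁ | T̃) ≤ I(S₁; (Y₁, Y₂) | T̃), where ⊕ is coordinatewise addition in 𝔽₂^K. -/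
namespace FinInfo

variable {Ω : Type*} [Fintype Ω]

/-- The probability that the random variable `X` takes the value `a`, where the
underlying finite sample space carries the probability mass function `p`. -/
noncomputable def pr (p : Ω → ℝ) {α : Type*} [DecidableEq α] (X : Ω → α) (a : α) : ℝ :=
  ∑ ω, if X ω = a then p ω else 0

/-- The Shannon entropy `H(X)` of a finitely valued random variable `X` on a
finite probability space with mass function `p` (natural logarithm). -/
noncomputable def entropy (p : Ω → ℝ) {α : Type*} [Fintype α] [DecidableEq α]
    (X : Ω → α) : ℝ :=
  ∑ a : α, Real.negMulLog (pr p X a)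

/-- Conditional entropy `H(X | Y) = H(X, Y) - H(Y)`. -/
noncomputable def condEntropy (p : Ω → ℝ) {α β : Type*} [Fintype α] [DecidableEq α]
    [Fintype β] [DecidableEq β] (X : Ω → α) (Y : Ω → β) : ℝ :=
  entropy p (fun ω => (X ω, Y ω)) - entropy p Y

/-- Conditional mutual information
`I(X ; Y | Z) = H(X, Z) + H(Y, Z) - H(X, Y, Z) - H(Z)`. -/
noncomputable def condMutualInfo (p : Ω → ℝ) {α β γ : Type*}
    [Fintype α] [DecidableEq α] [Fintype β] [DecidableEq β] [Fintype γ] [DecidableEq γ]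
    (X : Ω → α) (Y : Ω → β) (Z : Ω → γ) : ℝ :=
  entropy p (fun ω => (X ω, Z ω)) + entropy p (fun ω => (Y ω, Z ω))
    - entropy p (fun ω => (X ω, Y ω, Z ω)) - entropy p Z

end FinInfo

namespace FinInfo

variable {Ω : Type*} [Fintype Ω]

lemma pr_nonneg (p : Ω → ℝ) (hp0 : ∀ ω, 0 ≤ p ω) {α : Type*} [DecidableEq α]
    (X : Ω → α) (a : α) : 0 ≤ pr p X a := by
  apply Finset.sum_nonneg
  intro ω _
  split <;> simp [hp0 ω]

lemma pr_sum_one (p : Ω → ℝ) (hp1 : ∑ ω, p ω = 1) {α : Type*} [Fintype α] [DecidableEq α]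
    (X : Ω → α) : ∑ a, pr p X a = 1 := by
  unfold pr
  rw [Finset.sum_comm]
  rw [← hp1]
  refine Finset.sum_congr rfl fun ω _ => ?_
  rw [Finset.sum_eq_single_of_mem (X ω) (Finset.mem_univ _)]
  · simp
  · intro b _ hb
    simp [Ne.symm hb]

lemma pr_comp (p : Ω → ℝ) {α β : Type*} [Fintype α] [DecidableEq α] [DecidableEq β]
    (g : α → β) (X : Ω → α) (b : β) :
    pr p (fun ω => g (X ω)) b = ∑ a, if g a = b then pr p X a else 0 := by
  unfold pr
  have : ∀ a : α, (if g a = b then ∑ ω, if X ω = a then p ω else 0 else 0)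
      = ∑ ω, if g a = b then (if X ω = a then p ω else 0) else 0 := by
    intro a; split <;> simp
  simp only [this]
  rw [Finset.sum_comm]
  refine Finset.sum_congr rfl fun ω _ => ?_
  rw [Finset.sum_eq_single_of_mem (X ω) (Finset.mem_univ _)]
  · simp
  · intro a _ ha
    simp [Ne.symm ha]

lemma pr_marg_fst (p : Ω → ℝ) {α β : Type*} [Fintype α] [DecidableEq α] [DecidableEq β]
    (X : Ω → α) (Y : Ω → β) (b : β) :
    pr p Y b = ∑ a, pr p (fun ω => (X ω, Y ω)) (a, b) := by
  unfold pr
  rw [Finset.sum_comm]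
  refine Finset.sum_congr rfl fun ω _ => ?_
  rw [Finset.sum_eq_single_of_mem (X ω) (Finset.mem_univ _)]
  · simp [Prod.ext_iff]
  · intro a _ ha
    simp only [Prod.mk.injEq]
    exact if_neg fun h => ha h.1.symm

lemma pr_marg_mid (p : Ω → ℝ) {α β γ : Type*} [Fintype β] [DecidableEq α] [DecidableEq β]
    [DecidableEq γ] (X : Ω → α) (Y : Ω → β) (Z : Ω → γ) (x : α) (z : γ) :
    pr p (fun ω => (X ω, Z ω)) (x, z) = ∑ y, pr p (fun ω => (X ω, Y ω, Z ω)) (x, y, z) := by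
  unfold pr
  rw [Finset.sum_comm]
  refine Finset.sum_congr rfl fun ω _ => ?_
  rw [Finset.sum_eq_single_of_mem (Y ω) (Finset.mem_univ _)]
  · simp [Prod.ext_iff]
  · intro b _ hb
    simp only [Prod.mk.injEq]
    exact if_neg fun h => hb h.2.1.symm

lemma entropy_comp_injective (p : Ω → ℝ) {α β : Type*} [Fintype α] [DecidableEq α]
    [Fintype β] [DecidableEq β] (X : Ω → α) (f : α → β) (hf : Function.Injective f) :
    entropy p (fun ω => f (X ω)) = entropy p X := by
  unfold entropy
  rw [← Finset.sum_subset (Finset.subset_univ (Finset.univ.image f))]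
  · rw [Finset.sum_image (fun a _ a' _ h => hf h)]
    refine Finset.sum_congr rfl fun a _ => ?_
    congr 1
    unfold pr
    refine Finset.sum_congr rfl fun ω _ => ?_
    simp [hf.eq_iff]
  · intro b _ hb
    have : pr p (fun ω => f (X ω)) b = 0 := by
      unfold pr
      apply Finset.sum_eq_zero
      intro ω _
      have : f (X ω) ≠ b := by
        intro h
        exact hb (Finset.mem_image.mpr ⟨X ω, Finset.mem_univ _, h⟩)
      simp [this]
    simp [this]


lemma negMulLog_expand {ι : Type*} [Fintype ι] (f : ι → ℝ) (t : ℝ) (h : t = ∑ i, f i) :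
    Real.negMulLog t = ∑ i, -(f i * Real.log t) := by
  have h0 : Real.negMulLog t = -t * Real.log t := rfl
  rw [h0]
  nth_rewrite 1 [h]
  rw [neg_mul, Finset.sum_mul, ← Finset.sum_neg_distrib]

lemma cmi_nonneg (p : Ω → ℝ) (hp0 : ∀ ω, 0 ≤ p ω) (hp1 : ∑ ω, p ω = 1)
    {α β γ : Type*} [Fintype α] [DecidableEq α] [Fintype β] [DecidableEq β]
    [Fintype γ] [DecidableEq γ] (X : Ω → α) (Y : Ω → β) (Z : Ω → γ) :
    0 ≤ condMutualInfo p X Y Z := by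
  classical
  unfold condMutualInfo entropy
  set q123 := pr p (fun ω => (X ω, Y ω, Z ω)) with hq123
  set q13 := pr p (fun ω => (X ω, Z ω)) with hq13
  set q23 := pr p (fun ω => (Y ω, Z ω)) with hq23
  set q3 := pr p Z with hq3
  have m13 : ∀ x z, q13 (x, z) = ∑ y, q123 (x, y, z) := fun x z => pr_marg_mid p X Y Z x z
  have m23 : ∀ y z, q23 (y, z) = ∑ x, q123 (x, y, z) := fun y z =>
    pr_marg_fst p X (fun ω => (Y ω, Z ω)) (y, z)
  have m3a : ∀ z, q3 z = ∑ x, q13 (x, z) := fun z => pr_marg_fst p X Z z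
  have m3b : ∀ z, q3 z = ∑ y, q23 (y, z) := fun z => pr_marg_fst p Y Z z
  have n123 : ∀ v, 0 ≤ q123 v := fun v => pr_nonneg p hp0 _ v
  have n13 : ∀ v, 0 ≤ q13 v := fun v => pr_nonneg p hp0 _ v
  have n23 : ∀ v, 0 ≤ q23 v := fun v => pr_nonneg p hp0 _ v
  have n3 : ∀ v, 0 ≤ q3 v := fun v => pr_nonneg p hp0 _ v
  have h13pos : ∀ x y z, 0 < q123 (x, y, z) → 0 < q13 (x, z) := by
    intro x y z h
    rw [m13]
    exact lt_of_lt_of_le h (Finset.single_le_sum (f := fun y' => q123 (x, y', z))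
      (fun i _ => n123 _) (Finset.mem_univ y))
  have h23pos : ∀ x y z, 0 < q123 (x, y, z) → 0 < q23 (y, z) := by
    intro x y z h
    rw [m23]
    exact lt_of_lt_of_le h (Finset.single_le_sum (f := fun x' => q123 (x', y, z))
      (fun i _ => n123 _) (Finset.mem_univ x))
  have h3pos : ∀ x y z, 0 < q123 (x, y, z) → 0 < q3 z := by
    intro x y z h
    rw [m3a]
    exact lt_of_lt_of_le (h13pos x y z h)
      (Finset.single_le_sum (f := fun x' => q13 (x', z)) (fun i _ => n13 _) (Finset.mem_univ x))
  -- expand the four entropies as triple sums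
  have E13 : ∑ v : α × γ, Real.negMulLog (q13 v)
      = ∑ x, ∑ y, ∑ z, -(q123 (x, y, z) * Real.log (q13 (x, z))) := by
    rw [Fintype.sum_prod_type]
    refine Finset.sum_congr rfl fun x _ => ?_
    rw [Finset.sum_comm]
    exact Finset.sum_congr rfl fun z _ => negMulLog_expand _ _ (m13 x z)
  have E23 : ∑ v : β × γ, Real.negMulLog (q23 v)
      = ∑ x, ∑ y, ∑ z, -(q123 (x, y, z) * Real.log (q23 (y, z))) := by
    calc ∑ v : β × γ, Real.negMulLog (q23 v)
        = ∑ y, ∑ z, ∑ x, -(q123 (x, y, z) * Real.log (q23 (y, z))) := by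
          rw [Fintype.sum_prod_type]
          exact Finset.sum_congr rfl fun y _ => Finset.sum_congr rfl fun z _ =>
            negMulLog_expand _ _ (m23 y z)
      _ = ∑ y, ∑ x, ∑ z, -(q123 (x, y, z) * Real.log (q23 (y, z))) :=
          Finset.sum_congr rfl fun y _ => Finset.sum_comm
      _ = ∑ x, ∑ y, ∑ z, -(q123 (x, y, z) * Real.log (q23 (y, z))) := Finset.sum_comm
  have E123 : ∑ v : α × β × γ, Real.negMulLog (q123 v)
      = ∑ x, ∑ y, ∑ z, Real.negMulLog (q123 (x, y, z)) := by
    rw [Fintype.sum_prod_type]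
    exact Finset.sum_congr rfl fun x _ => by rw [Fintype.sum_prod_type]
  have E3 : ∑ z, Real.negMulLog (q3 z)
      = ∑ x, ∑ y, ∑ z, -(q123 (x, y, z) * Real.log (q3 z)) := by
    calc ∑ z, Real.negMulLog (q3 z)
        = ∑ z, ∑ v : α × β, -(q123 (v.1, v.2, z) * Real.log (q3 z)) := by
          refine Finset.sum_congr rfl fun z _ => negMulLog_expand _ _ ?_
          rw [m3a z, Fintype.sum_prod_type]
          exact Finset.sum_congr rfl fun x _ => m13 x z
      _ = ∑ z, ∑ x, ∑ y, -(q123 (x, y, z) * Real.log (q3 z)) := by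
          refine Finset.sum_congr rfl fun z _ => ?_
          rw [Fintype.sum_prod_type]
      _ = ∑ x, ∑ z, ∑ y, -(q123 (x, y, z) * Real.log (q3 z)) := Finset.sum_comm
      _ = ∑ x, ∑ y, ∑ z, -(q123 (x, y, z) * Real.log (q3 z)) :=
          Finset.sum_congr rfl fun x _ => Finset.sum_comm
  rw [E13, E23, E123, E3]
  have comb : (∑ x, ∑ y, ∑ z, -(q123 (x, y, z) * Real.log (q13 (x, z))))
      + (∑ x, ∑ y, ∑ z, -(q123 (x, y, z) * Real.log (q23 (y, z))))
      - (∑ x, ∑ y, ∑ z, Real.negMulLog (q123 (x, y, z)))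
      - (∑ x, ∑ y, ∑ z, -(q123 (x, y, z) * Real.log (q3 z)))
      = ∑ x, ∑ y, ∑ z, q123 (x, y, z) * (Real.log (q123 (x, y, z)) + Real.log (q3 z)
          - Real.log (q13 (x, z)) - Real.log (q23 (y, z))) := by
    simp only [← Finset.sum_add_distrib, ← Finset.sum_sub_distrib]
    refine Finset.sum_congr rfl fun x _ => Finset.sum_congr rfl fun y _ =>
      Finset.sum_congr rfl fun z _ => ?_
    simp only [Real.negMulLog]
    ring
  rw [comb]
  have key : ∀ x y z, q123 (x, y, z) - q13 (x, z) * q23 (y, z) / q3 z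
      ≤ q123 (x, y, z) * (Real.log (q123 (x, y, z)) + Real.log (q3 z)
          - Real.log (q13 (x, z)) - Real.log (q23 (y, z))) := by
    intro x y z
    rcases eq_or_lt_of_le (n123 (x, y, z)) with h0 | hpos
    · rw [← h0]
      simp only [zero_sub, zero_mul]
      have : 0 ≤ q13 (x, z) * q23 (y, z) / q3 z :=
        div_nonneg (mul_nonneg (n13 _) (n23 _)) (n3 _)
      linarith
    · have p13 := h13pos x y z hpos
      have p23 := h23pos x y z hpos
      have p3 := h3pos x y z hpos
      have hb : 0 < q13 (x, z) * q23 (y, z) / q3 z :=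
        div_pos (mul_pos p13 p23) p3
      have hlogb : Real.log (q13 (x, z) * q23 (y, z) / q3 z)
          = Real.log (q13 (x, z)) + Real.log (q23 (y, z)) - Real.log (q3 z) := by
        rw [Real.log_div (mul_pos p13 p23).ne' p3.ne', Real.log_mul p13.ne' p23.ne']
      have h := Real.log_le_sub_one_of_pos (div_pos hb hpos)
      rw [Real.log_div hb.ne' hpos.ne'] at h
      have hmul := mul_le_mul_of_nonneg_left h hpos.le
      have heq : q123 (x, y, z) * (q13 (x, z) * q23 (y, z) / q3 z / q123 (x, y, z) - 1)
          = q13 (x, z) * q23 (y, z) / q3 z - q123 (x, y, z) := by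
        field_simp
      have hre : q123 (x, y, z) * (Real.log (q123 (x, y, z)) + Real.log (q3 z)
          - Real.log (q13 (x, z)) - Real.log (q23 (y, z)))
          = -(q123 (x, y, z) * (Real.log (q13 (x, z) * q23 (y, z) / q3 z)
              - Real.log (q123 (x, y, z)))) := by
        rw [hlogb]; ring
      rw [hre]
      linarith
  have sum1 : ∑ x, ∑ y, ∑ z, q123 (x, y, z) = 1 := by
    have := pr_sum_one p hp1 (fun ω => (X ω, Y ω, Z ω))
    rw [Fintype.sum_prod_type] at this
    rw [← this]
    exact Finset.sum_congr rfl fun x _ =>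
      (Fintype.sum_prod_type (f := fun v : β × γ => q123 (x, v))).symm
  have sumb : ∑ x, ∑ y, ∑ z, q13 (x, z) * q23 (y, z) / q3 z ≤ 1 := by
    have reord : (∑ x, ∑ y, ∑ z, q13 (x, z) * q23 (y, z) / q3 z)
        = ∑ z, ∑ x, ∑ y, q13 (x, z) * q23 (y, z) / q3 z :=
      calc (∑ x, ∑ y, ∑ z, q13 (x, z) * q23 (y, z) / q3 z)
          = ∑ x, ∑ z, ∑ y, q13 (x, z) * q23 (y, z) / q3 z :=
            Finset.sum_congr rfl fun x _ => Finset.sum_comm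
        _ = ∑ z, ∑ x, ∑ y, q13 (x, z) * q23 (y, z) / q3 z := Finset.sum_comm
    rw [reord]
    have perz : ∀ z, (∑ x, ∑ y, q13 (x, z) * q23 (y, z) / q3 z) ≤ q3 z := by
      intro z
      rcases eq_or_ne (q3 z) 0 with h | h
      · simp [h]
      · have hcalc : (∑ x, ∑ y, q13 (x, z) * q23 (y, z) / q3 z)
            = (∑ x, q13 (x, z)) * (∑ y, q23 (y, z)) / q3 z := by
          simp only [← Finset.sum_div, ← Finset.mul_sum, ← Finset.sum_mul]
        rw [hcalc, ← m3a, ← m3b, mul_div_assoc, div_self h, mul_one]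
    calc (∑ z, ∑ x, ∑ y, q13 (x, z) * q23 (y, z) / q3 z)
        ≤ ∑ z, q3 z := Finset.sum_le_sum fun z _ => perz z
      _ = 1 := pr_sum_one p hp1 Z
  have hFge : (∑ x, ∑ y, ∑ z, (q123 (x, y, z) - q13 (x, z) * q23 (y, z) / q3 z))
      ≤ ∑ x, ∑ y, ∑ z, q123 (x, y, z) * (Real.log (q123 (x, y, z)) + Real.log (q3 z)
          - Real.log (q13 (x, z)) - Real.log (q23 (y, z))) :=
    Finset.sum_le_sum fun x _ => Finset.sum_le_sum fun y _ =>
      Finset.sum_le_sum fun z _ => key x y z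
  have split : (∑ x, ∑ y, ∑ z, (q123 (x, y, z) - q13 (x, z) * q23 (y, z) / q3 z))
      = (∑ x, ∑ y, ∑ z, q123 (x, y, z))
        - ∑ x, ∑ y, ∑ z, q13 (x, z) * q23 (y, z) / q3 z := by
    simp only [Finset.sum_sub_distrib]
  linarith


end FinInfo


open FinInfo in
/-- Lemma 1: if `S₁` is uniform on `𝔽₂^K`, the triple `(S₁, S₂, T̃)` is mutually
independent, and `S₁, S₂` are conditionally independent given `(Y₁, Y₂, T̃)`, then
`I(S₁ ⊕ S₂ ; Y₁ | T̃) ≤ I(S₁ ; (Y₁, Y₂) | T̃)`. -/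
theorem lemma1 {Ω : Type*} [Fintype Ω] (p : Ω → ℝ)
    (hp0 : ∀ ω, 0 ≤ p ω) (hp1 : ∑ ω, p ω = 1)
    {K : ℕ} (S1 S2 : Ω → (Fin K → ZMod 2))
    {τ υ1 υ2 : Type*} [Fintype τ] [DecidableEq τ]
    [Fintype υ1] [DecidableEq υ1] [Fintype υ2] [DecidableEq υ2]
    (Tt : Ω → τ) (Y1 : Ω → υ1) (Y2 : Ω → υ2)
    (hunif : ∀ s : Fin K → ZMod 2, pr p S1 s = 1 / 2 ^ K)
    (hindep : ∀ (a b : Fin K → ZMod 2) (c : τ),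
      pr p (fun ω => (S1 ω, S2 ω, Tt ω)) (a, b, c) = pr p S1 a * pr p S2 b * pr p Tt c)
    (hci : condMutualInfo p S1 S2 (fun ω => (Y1 ω, Y2 ω, Tt ω)) = 0) :
    condMutualInfo p (fun ω => S1 ω + S2 ω) Y1 Tt
      ≤ condMutualInfo p S1 (fun ω => (Y1 ω, Y2 ω)) Tt := by
  classical
  have hq2sum : ∑ b, pr p S2 b = 1 := pr_sum_one p hp1 S2
  have hS1T : ∀ (a : Fin K → ZMod 2) (t : τ),
      pr p (fun ω => (S1 ω, Tt ω)) (a, t) = (1 / 2 ^ K) * pr p Tt t := by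
    intro a t
    rw [pr_marg_mid p S1 S2 Tt a t]
    calc ∑ b, pr p (fun ω => (S1 ω, S2 ω, Tt ω)) (a, b, t)
        = ∑ b, pr p S1 a * pr p S2 b * pr p Tt t :=
          Finset.sum_congr rfl fun b _ => hindep a b t
      _ = (pr p S1 a * ∑ b, pr p S2 b) * pr p Tt t := by
          rw [← Finset.sum_mul, ← Finset.mul_sum]
      _ = (1 / 2 ^ K) * pr p Tt t := by rw [hq2sum, hunif, mul_one]
  have hWT : ∀ (w : Fin K → ZMod 2) (t : τ),
      pr p (fun ω => (S1 ω + S2 ω, Tt ω)) (w, t) = (1 / 2 ^ K) * pr p Tt t := by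
    intro w t
    have hc : pr p (fun ω => (S1 ω + S2 ω, Tt ω)) (w, t)
        = ∑ v : (Fin K → ZMod 2) × (Fin K → ZMod 2) × τ,
            if (v.1 + v.2.1, v.2.2) = (w, t)
              then pr p (fun ω => (S1 ω, S2 ω, Tt ω)) v else 0 :=
      pr_comp p (fun v : (Fin K → ZMod 2) × (Fin K → ZMod 2) × τ => (v.1 + v.2.1, v.2.2))
        (fun ω => (S1 ω, S2 ω, Tt ω)) (w, t)
    rw [hc]
    rw [Fintype.sum_prod_type]
    calc (∑ a, ∑ v : (Fin K → ZMod 2) × τ,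
            if (a + v.1, v.2) = (w, t) then pr p (fun ω => (S1 ω, S2 ω, Tt ω)) (a, v) else 0)
        = ∑ a, ∑ b, ∑ c, if (a + b, c) = (w, t)
            then pr p (fun ω => (S1 ω, S2 ω, Tt ω)) (a, b, c) else 0 :=
          Finset.sum_congr rfl fun a _ => by rw [Fintype.sum_prod_type]
      _ = ∑ b, ∑ a, ∑ c, if (a + b, c) = (w, t)
            then pr p (fun ω => (S1 ω, S2 ω, Tt ω)) (a, b, c) else 0 := Finset.sum_comm
      _ = ∑ b, ∑ a, if a + b = w then 1 / 2 ^ K * pr p S2 b * pr p Tt t else 0 := by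
          refine Finset.sum_congr rfl fun b _ => Finset.sum_congr rfl fun a _ => ?_
          simp only [hindep, hunif, Prod.mk.injEq, ite_and, Finset.sum_ite_irrel,
            Finset.sum_const_zero, Finset.sum_ite_eq', Finset.mem_univ, if_true]
      _ = ∑ b : Fin K → ZMod 2, 1 / 2 ^ K * pr p S2 b * pr p Tt t := by
          refine Finset.sum_congr rfl fun b _ => ?_
          have : ∀ a : Fin K → ZMod 2, (a + b = w) = (a = w - b) := by
            intro a
            simp only [eq_iff_iff]
            constructor
            · intro h; rw [← h]; abel
            · intro h; rw [h]; abel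
          simp only [this, Finset.sum_ite_eq', Finset.mem_univ, if_true]
      _ = (1 / 2 ^ K) * pr p Tt t := by
          rw [← Finset.sum_mul]
          rw [show (∑ b, 1 / (2:ℝ) ^ K * pr p S2 b) = 1 / 2 ^ K * ∑ b, pr p S2 b from
            (Finset.mul_sum _ _ _).symm]
          rw [hq2sum, mul_one]
  have hHWT : entropy p (fun ω => (S1 ω + S2 ω, Tt ω)) = entropy p (fun ω => (S1 ω, Tt ω)) := by
    unfold entropy
    refine Finset.sum_congr rfl fun v _ => ?_
    obtain ⟨w, t⟩ := v
    rw [hWT w t, hS1T w t]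
  -- relabelings of the conditional independence hypothesis
  have hci' : entropy p (fun ω => (S1 ω, Y1 ω, Y2 ω, Tt ω))
      + entropy p (fun ω => (S2 ω, Y1 ω, Y2 ω, Tt ω))
      - entropy p (fun ω => (S1 ω, S2 ω, Y1 ω, Y2 ω, Tt ω))
      - entropy p (fun ω => (Y1 ω, Y2 ω, Tt ω)) = 0 := hci
  have R1 : entropy p (fun ω => ((Y1 ω, Y2 ω), Tt ω))
      = entropy p (fun ω => (Y1 ω, Y2 ω, Tt ω)) :=
    entropy_comp_injective p (fun ω => (Y1 ω, Y2 ω, Tt ω))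
      (fun v : υ1 × υ2 × τ => ((v.1, v.2.1), v.2.2))
      (by rintro ⟨a, b, c⟩ ⟨a', b', c'⟩ h; simp only [Prod.mk.injEq] at h ⊢; tauto)
  have R2 : entropy p (fun ω => (S1 ω, (Y1 ω, Y2 ω), Tt ω))
      = entropy p (fun ω => (S1 ω, Y1 ω, Y2 ω, Tt ω)) :=
    entropy_comp_injective p (fun ω => (S1 ω, Y1 ω, Y2 ω, Tt ω))
      (fun v : (Fin K → ZMod 2) × υ1 × υ2 × τ => (v.1, (v.2.1, v.2.2.1), v.2.2.2))
      (by rintro ⟨a, b, c, d⟩ ⟨a', b', c', d'⟩ h; simp only [Prod.mk.injEq] at h ⊢; tauto)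
  have R3 : entropy p (fun ω => (S2 ω, (Y1 ω, Y2 ω), Tt ω))
      = entropy p (fun ω => (S2 ω, Y1 ω, Y2 ω, Tt ω)) :=
    entropy_comp_injective p (fun ω => (S2 ω, Y1 ω, Y2 ω, Tt ω))
      (fun v : (Fin K → ZMod 2) × υ1 × υ2 × τ => (v.1, (v.2.1, v.2.2.1), v.2.2.2))
      (by rintro ⟨a, b, c, d⟩ ⟨a', b', c', d'⟩ h; simp only [Prod.mk.injEq] at h ⊢; tauto)
  have R4 : entropy p (fun ω => (S1 ω, S2 ω, (Y1 ω, Y2 ω), Tt ω))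
      = entropy p (fun ω => (S1 ω, S2 ω, Y1 ω, Y2 ω, Tt ω)) :=
    entropy_comp_injective p (fun ω => (S1 ω, S2 ω, Y1 ω, Y2 ω, Tt ω))
      (fun v : (Fin K → ZMod 2) × (Fin K → ZMod 2) × υ1 × υ2 × τ =>
        (v.1, v.2.1, (v.2.2.1, v.2.2.2.1), v.2.2.2.2))
      (by rintro ⟨a, b, c, d, e⟩ ⟨a', b', c', d', e'⟩ h
          simp only [Prod.mk.injEq] at h ⊢; tauto)
  -- shear bijection: (S1+S2, S2, ⋅) ↔ (S1, S2, ⋅)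
  have SH : entropy p (fun ω => (S1 ω + S2 ω, S2 ω, (Y1 ω, Y2 ω), Tt ω))
      = entropy p (fun ω => (S1 ω, S2 ω, (Y1 ω, Y2 ω), Tt ω)) :=
    entropy_comp_injective p (fun ω => (S1 ω, S2 ω, (Y1 ω, Y2 ω), Tt ω))
      (fun v : (Fin K → ZMod 2) × (Fin K → ZMod 2) × ((υ1 × υ2) × τ) =>
        (v.1 + v.2.1, v.2.1, v.2.2))
      (by rintro ⟨a, b, c⟩ ⟨a', b', c'⟩ h
          simp only [Prod.mk.injEq] at h ⊢
          obtain ⟨h1, h2, h3⟩ := h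
          subst h2
          exact ⟨add_right_cancel h1, rfl, h3⟩)
  -- relabelings used in step 1
  have A1 : entropy p (fun ω => (Y2 ω, Y1 ω, Tt ω))
      = entropy p (fun ω => ((Y1 ω, Y2 ω), Tt ω)) :=
    (entropy_comp_injective p (fun ω => (Y2 ω, Y1 ω, Tt ω))
      (fun v : υ2 × υ1 × τ => ((v.2.1, v.1), v.2.2))
      (by rintro ⟨a, b, c⟩ ⟨a', b', c'⟩ h; simp only [Prod.mk.injEq] at h ⊢; tauto)).symm
  have A2 : entropy p (fun ω => (S1 ω + S2 ω, Y2 ω, Y1 ω, Tt ω))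
      = entropy p (fun ω => (S1 ω + S2 ω, (Y1 ω, Y2 ω), Tt ω)) :=
    (entropy_comp_injective p (fun ω => (S1 ω + S2 ω, Y2 ω, Y1 ω, Tt ω))
      (fun v : (Fin K → ZMod 2) × υ2 × υ1 × τ => (v.1, (v.2.2.1, v.2.1), v.2.2.2))
      (by rintro ⟨a, b, c, d⟩ ⟨a', b', c', d'⟩ h; simp only [Prod.mk.injEq] at h ⊢; tauto)).symm
  -- two instances of nonnegativity of conditional mutual information
  have N1 : 0 ≤ entropy p (fun ω => (S1 ω + S2 ω, Y1 ω, Tt ω))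
      + entropy p (fun ω => (Y2 ω, Y1 ω, Tt ω))
      - entropy p (fun ω => (S1 ω + S2 ω, Y2 ω, Y1 ω, Tt ω))
      - entropy p (fun ω => (Y1 ω, Tt ω)) :=
    cmi_nonneg p hp0 hp1 (fun ω => S1 ω + S2 ω) Y2 (fun ω => (Y1 ω, Tt ω))
  have N2 : 0 ≤ entropy p (fun ω => (S1 ω + S2 ω, (Y1 ω, Y2 ω), Tt ω))
      + entropy p (fun ω => (S2 ω, (Y1 ω, Y2 ω), Tt ω))
      - entropy p (fun ω => (S1 ω + S2 ω, S2 ω, (Y1 ω, Y2 ω), Tt ω))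
      - entropy p (fun ω => ((Y1 ω, Y2 ω), Tt ω)) :=
    cmi_nonneg p hp0 hp1 (fun ω => S1 ω + S2 ω) S2 (fun ω => ((Y1 ω, Y2 ω), Tt ω))
  have final : entropy p (fun ω => (S1 ω + S2 ω, Tt ω)) + entropy p (fun ω => (Y1 ω, Tt ω))
      - entropy p (fun ω => (S1 ω + S2 ω, Y1 ω, Tt ω)) - entropy p Tt
      ≤ entropy p (fun ω => (S1 ω, Tt ω)) + entropy p (fun ω => ((Y1 ω, Y2 ω), Tt ω))
      - entropy p (fun ω => (S1 ω, (Y1 ω, Y2 ω), Tt ω)) - entropy p Tt := by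
    linarith [hHWT, hci', R1, R2, R3, R4, SH, A1, A2, N1, N2]
  exact final
end

section
/- In the four-node ADT deterministic two-way function-multicast network with m ≠ n, the forward sources S₁^K and S₂^K are conditionally independent given (Y₁^N, Y₂^N, S̃₁^K̃, S̃₂^K̃); equivalently, the conditional mutual information I(S₁^K; S₂^K | Y₁^N, Y₂^N, S̃₁^K̃, S̃₂^K̃) = 0 (the Markov chain S₁^K − (Y₁^N, Y₂^N, S̃₁^K̃, S̃₂^K̃) − S₂^K holds). -/
open Matrix Filter

/-!
Fix the backward sources and the forward outputs `y = (Y₁^N, Y₂^N)`. The backward nodes see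
only `y` and their own sources, so their transmissions, and with them the backward signals
`Ỹ₁, Ỹ₂`, are functions of `(S̃₁, S̃₂, y)`; hence node `k`'s transmissions depend on the forward
sources only through `S_k`. For `m ≠ n` the channel `(x₁, x₂) ↦ (Y₁, Y₂)` is injective (its
block matrix `[[A, B], [B, A]]` has `{A, B} = {1, G^d}` with `G^d` nilpotent, so `A ± B` are
units), so `y` determines each node's transmissions separately and the set of `(S₁, S₂)`
compatible with `(y, S̃₁, S̃₂)` is a product set. Under the uniform law, the conditional law of
`(S₁, S₂)` is then uniform on a product, i.e. a product law.
-/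

namespace FinInfo
open Finset Real

variable {Ω α β γ : Type*} [Fintype Ω]

lemma pr_const [DecidableEq α] (c : ℝ) (X : Ω → α) (a : α) :
    pr (fun _ => c) X a = #{ω | X ω = a} * c := by
  rw [pr, ← sum_filter, sum_const, nsmul_eq_mul]

lemma entropy_const [Fintype α] [DecidableEq α] (c : ℝ) (X : Ω → α) :
    entropy (fun _ => c) X = ∑ a, negMulLog (#{ω | X ω = a} * c) := by
  simp only [entropy, pr_const]

lemma sum_negMulLog_card_filter_eq_mul [Fintype α] [DecidableEq α] (s : Finset α) (c : ℝ) :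
    ∑ a, negMulLog (#{x ∈ s | x = a} * c) = #s * negMulLog c := by
  simp only [filter_eq', apply_ite card, card_singleton, card_empty, Nat.cast_ite,
    Nat.cast_one, Nat.cast_zero, ite_mul, one_mul, zero_mul, apply_ite negMulLog,
    negMulLog_zero, sum_ite_mem, univ_inter, sum_const, nsmul_eq_mul]

lemma card_filter_and_and_eq_mul [DecidableEq α] [DecidableEq β] [DecidableEq γ]
    {X : Ω → α} {Y : Ω → β} {Z : Ω → γ}
    (hexch : ∀ ω ω', Z ω = Z ω' → ∃ ω'', X ω'' = X ω ∧ Y ω'' = Y ω' ∧ Z ω'' = Z ω)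
    (hinj : ∀ ω ω', X ω = X ω' → Y ω = Y ω' → Z ω = Z ω' → ω = ω')
    (z : γ) (p : α → Prop) (q : β → Prop) [DecidablePred p] [DecidablePred q] :
    #{ω | Z ω = z ∧ p (X ω) ∧ q (Y ω)} =
      #{x ∈ univ.filter (Z · = z) |>.image X | p x} *
        #{y ∈ univ.filter (Z · = z) |>.image Y | q y} := by
  rw [← card_product, ← card_image_of_injOn (f := fun ω => (X ω, Y ω))]
  · congr 1
    ext ⟨x, y⟩
    simp only [mem_image, mem_filter, mem_univ, true_and, mem_product, Prod.mk.injEq]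
    constructor
    · rintro ⟨ω, ⟨hz, hp, hq⟩, rfl, rfl⟩
      exact ⟨⟨⟨ω, hz, rfl⟩, hp⟩, ⟨ω, hz, rfl⟩, hq⟩
    · rintro ⟨⟨⟨ω, hz, rfl⟩, hp⟩, ⟨ω', hz', rfl⟩, hq⟩
      obtain ⟨ω'', hx, hy, hz''⟩ := hexch ω ω' (hz.trans hz'.symm)
      exact ⟨ω'', ⟨hz''.trans hz, hx ▸ hp, hy ▸ hq⟩, hx, hy⟩
  · intro ω hω ω' hω' h
    simp only [mem_coe, mem_filter, mem_univ, true_and, Prod.mk.injEq] at hω hω' h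
    exact hinj ω ω' h.1 h.2 (hω.1.trans hω'.1.symm)

theorem condMutualInfo_const_eq_zero_of_exchange [Fintype α] [DecidableEq α] [Fintype β]
    [DecidableEq β] [Fintype γ] [DecidableEq γ] {X : Ω → α} {Y : Ω → β} {Z : Ω → γ}
    (hexch : ∀ ω ω', Z ω = Z ω' → ∃ ω'', X ω'' = X ω ∧ Y ω'' = Y ω' ∧ Z ω'' = Z ω)
    (hinj : ∀ ω ω', X ω = X ω' → Y ω = Y ω' → Z ω = Z ω' → ω = ω') (c : ℝ) :
    condMutualInfo (fun _ => c) X Y Z = 0 := by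
  set A := fun z => (univ.filter (Z · = z)).image X
  set B := fun z => (univ.filter (Z · = z)).image Y
  have hcard := card_filter_and_and_eq_mul hexch hinj
  have hZ : entropy (fun _ => c) Z = ∑ z, negMulLog (#(A z) * #(B z) * c) := by
    refine (entropy_const c Z).trans (sum_congr rfl fun z _ => ?_)
    have h : #{ω | Z ω = z} = #(A z) * #(B z) := by
      simpa using hcard z (fun _ => True) (fun _ => True)
    rw [h, Nat.cast_mul]
  have hXZ : entropy (fun _ => c) (fun ω => (X ω, Z ω)) =
      ∑ z, #(A z) * negMulLog (#(B z) * c) := by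
    rw [entropy_const, Fintype.sum_prod_type, sum_comm]
    refine sum_congr rfl fun z _ => ?_
    have h x : #{ω | (X ω, Z ω) = (x, z)} = #{x' ∈ A z | x' = x} * #(B z) := by
      simpa [and_comm] using hcard z (· = x) (fun _ => True)
    simp only [h, Nat.cast_mul, mul_assoc, sum_negMulLog_card_filter_eq_mul]
  have hYZ : entropy (fun _ => c) (fun ω => (Y ω, Z ω)) =
      ∑ z, #(B z) * negMulLog (#(A z) * c) := by
    rw [entropy_const, Fintype.sum_prod_type, sum_comm]
    refine sum_congr rfl fun z _ => ?_
    have h y : #{ω | (Y ω, Z ω) = (y, z)} = #{y' ∈ B z | y' = y} * #(A z) := by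
      simpa [and_comm, mul_comm] using hcard z (fun _ => True) (· = y)
    simp only [h, Nat.cast_mul, mul_assoc, sum_negMulLog_card_filter_eq_mul]
  have hXYZ : entropy (fun _ => c) (fun ω => (X ω, Y ω, Z ω)) =
      ∑ z, #(A z) * #(B z) * negMulLog c := by
    rw [entropy_const, Fintype.sum_prod_type, sum_comm, Fintype.sum_prod_type, sum_comm]
    refine sum_congr rfl fun z _ => ?_
    have h x y : #{ω | (X ω, Y ω, Z ω) = (x, y, z)} =
        #{x' ∈ A z | x' = x} * #{y' ∈ B z | y' = y} := by
      simpa [and_comm, and_left_comm, and_assoc] using hcard z (· = x) (· = y)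
    simp only [h, Nat.cast_mul, mul_assoc, sum_negMulLog_card_filter_eq_mul, ← mul_sum]
  rw [condMutualInfo, hXZ, hYZ, hXYZ, hZ, ← sum_add_distrib, ← sum_sub_distrib,
    ← sum_sub_distrib]
  refine sum_eq_zero fun z _ => ?_
  simp only [negMulLog_mul]
  ring

end FinInfo

namespace TwoWay
open Function

variable {m n mt nt : ℕ}

lemma shiftG_pow_apply_eq_zero {q d : ℕ} {i j : Fin q} (h : (i : ℕ) ≠ j + d) :
    (shiftG q ^ d) i j = 0 := by
  induction d generalizing i with
  | zero => exact one_apply_ne (by simpa [Fin.ext_iff] using h)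
  | succ d ih =>
    rw [pow_succ', mul_apply]
    refine Finset.sum_eq_zero fun k _ => ?_
    by_cases hk : (i : ℕ) = k + 1
    · rw [ih (by omega), mul_zero]
    · simp [shiftG, hk]

lemma shiftG_pow_self (q : ℕ) : shiftG q ^ q = 0 := by
  ext i j
  exact shiftG_pow_apply_eq_zero (by omega)

lemma isNilpotent_shiftG_pow {q d : ℕ} (hd : d ≠ 0) : IsNilpotent (shiftG q ^ d) :=
  IsNilpotent.pow_of_pos ⟨q, shiftG_pow_self q⟩ hd

lemma injective_symmBlock_mulVec {ι R : Type*} [Fintype ι] [DecidableEq ι] [CommRing R]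
    {A B : Matrix ι ι R} (hadd : IsUnit (A + B)) (hsub : IsUnit (A - B)) :
    Injective fun x : (ι → R) × (ι → R) => (A *ᵥ x.1 + B *ᵥ x.2, B *ᵥ x.1 + A *ᵥ x.2) := by
  rintro ⟨x₁, x₂⟩ ⟨x₁', x₂'⟩ h
  obtain ⟨h₁, h₂⟩ := Prod.mk.inj h
  have hsum : x₁ + x₂ = x₁' + x₂' := mulVec_injective_of_isUnit hadd <| by
    simp only [add_mulVec, mulVec_add]
    linear_combination h₁ + h₂
  have hfst : x₁ = x₁' := mulVec_injective_of_isUnit hsub <| by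
    have := congrArg (B *ᵥ ·) hsum
    simp only [sub_mulVec, mulVec_add] at this ⊢
    linear_combination h₁ - this
  subst hfst
  exact Prod.ext rfl (add_left_cancel hsum)

lemma chOut_injective (hmn : m ≠ n) :
    Injective fun x : (Fin (max m n) → ZMod 2) × (Fin (max m n) → ZMod 2) =>
      chOut m n x.1 x.2 := by
  rcases hmn.lt_or_gt with h | h
  · have hN := isNilpotent_shiftG_pow (q := max m n) (d := max m n - m) (by omega)
    simp only [chOut, show max m n - n = 0 by omega, pow_zero]
    exact injective_symmBlock_mulVec hN.isUnit_one_add hN.isUnit_one_sub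
  · have hN := isNilpotent_shiftG_pow (q := max m n) (d := max m n - n) (by omega)
    simp only [chOut, show max m n - m = 0 by omega, pow_zero]
    exact injective_symmBlock_mulVec hN.isUnit_add_one hN.isUnit_sub_one

lemma chOut_inj (hmn : m ≠ n) {x₁ x₂ x₁' x₂' : Fin (max m n) → ZMod 2} :
    chOut m n x₁ x₂ = chOut m n x₁' x₂' ↔ x₁ = x₁' ∧ x₂ = x₂' :=
  ((chOut_injective hmn).eq_iff (a := (x₁, x₂)) (b := (x₁', x₂'))).trans Prod.ext_iff

lemma hist_apply_s4 {C : Code m n mt nt} {s1 s2 : Fin C.K → ZMod 2} {t1 t2 : Fin C.Kt → ZMod 2}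
    {i j : ℕ} (h : j < i) :
    hist C s1 s2 t1 t2 i ⟨j, h⟩ = step C s1 s2 t1 t2 j (hist C s1 s2 t1 t2 j) := by
  induction i with
  | zero => omega
  | succ i ih =>
    rcases (Nat.lt_succ_iff_lt_or_eq.1 h) with hj | rfl
    · exact (Fin.snoc_castSucc (i := ⟨j, hj⟩) ..).trans (ih hj)
    · exact Fin.snoc_last ..

variable (C : Code m n mt nt)

/-- `(Y₁ᵢ, Y₂ᵢ)` for every `i : ℕ`, not only for `i < N`. -/
def fwdOut (s1 s2 : Fin C.K → ZMod 2) (t1 t2 : Fin C.Kt → ZMod 2) (i : ℕ) :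
    (Fin (max m n) → ZMod 2) × (Fin (max m n) → ZMod 2) :=
  chOut m n (step C s1 s2 t1 t2 i (hist C s1 s2 t1 t2 i)).1
    (step C s1 s2 t1 t2 i (hist C s1 s2 t1 t2 i)).2.1

section Replay

/- The run in which the backward nodes receive `y` in place of the true forward outputs; in it
node `k`'s forward transmissions depend on `s_k` alone. -/
variable (t1 t2 : Fin C.Kt → ZMod 2)
  (y : ℕ → (Fin (max m n) → ZMod 2) × (Fin (max m n) → ZMod 2))

def replayBack (i : ℕ) : (Fin (max mt nt) → ZMod 2) × (Fin (max mt nt) → ZMod 2) :=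
  (C.ft1 i t1 fun j => (y j).1, C.ft2 i t2 fun j => (y j).2)

def replayFwd1 (s1 : Fin C.K → ZMod 2) (i : ℕ) : Fin (max m n) → ZMod 2 :=
  C.f1 i s1 fun j => (chOut mt nt (replayBack C t1 t2 y j).1 (replayBack C t1 t2 y j).2).1

def replayFwd2 (s2 : Fin C.K → ZMod 2) (i : ℕ) : Fin (max m n) → ZMod 2 :=
  C.f2 i s2 fun j => (chOut mt nt (replayBack C t1 t2 y j).1 (replayBack C t1 t2 y j).2).2

variable {C t1 t2 y} {s1 s2 : Fin C.K → ZMod 2}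

lemma step_hist_eq_replay {i : ℕ}
    (hy : ∀ j < i, chOut m n (replayFwd1 C t1 t2 y s1 j) (replayFwd2 C t1 t2 y s2 j) = y j) :
    step C s1 s2 t1 t2 i (hist C s1 s2 t1 t2 i) =
      (replayFwd1 C t1 t2 y s1 i, replayFwd2 C t1 t2 y s2 i, replayBack C t1 t2 y i) := by
  induction i using Nat.strong_induction_on with
  | _ i ih =>
    have hhist : hist C s1 s2 t1 t2 i = fun j : Fin i =>
        (replayFwd1 C t1 t2 y s1 j, replayFwd2 C t1 t2 y s2 j, replayBack C t1 t2 y j) := by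
      funext ⟨j, hj⟩
      rw [hist_apply_s4 hj, ih j hj fun k hk => hy k (hk.trans hj)]
    simp only [step, hhist, fun j : Fin i => hy j j.isLt]
    rfl

lemma fwdOut_eq_chOut_replay {i : ℕ}
    (hy : ∀ j < i, chOut m n (replayFwd1 C t1 t2 y s1 j) (replayFwd2 C t1 t2 y s2 j) = y j) :
    fwdOut C s1 s2 t1 t2 i =
      chOut m n (replayFwd1 C t1 t2 y s1 i) (replayFwd2 C t1 t2 y s2 i) := by
  rw [fwdOut, step_hist_eq_replay hy]

lemma forall_fwdOut_eq_iff {i : ℕ} :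
    (∀ j < i, fwdOut C s1 s2 t1 t2 j = y j) ↔
      ∀ j < i, chOut m n (replayFwd1 C t1 t2 y s1 j) (replayFwd2 C t1 t2 y s2 j) = y j := by
  induction i with
  | zero => simp
  | succ i ih =>
    rw [Nat.forall_lt_succ_right, Nat.forall_lt_succ_right, ih]
    exact and_congr_right fun hy => by rw [fwdOut_eq_chOut_replay hy]

end Replay

variable {C} {s1 s2 s1' s2' : Fin C.K → ZMod 2} {t1 t2 : Fin C.Kt → ZMod 2}

lemma fwdOut_exchange (hmn : m ≠ n) {i : ℕ}
    (h : ∀ j < i, fwdOut C s1 s2 t1 t2 j = fwdOut C s1' s2' t1 t2 j) :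
    ∀ j < i, fwdOut C s1 s2' t1 t2 j = fwdOut C s1 s2 t1 t2 j := by
  set y := fwdOut C s1 s2 t1 t2
  have hy : ∀ j < i, chOut m n (replayFwd1 C t1 t2 y s1 j) (replayFwd2 C t1 t2 y s2 j) = y j :=
    forall_fwdOut_eq_iff.1 fun _ _ => rfl
  have hy' : ∀ j < i, chOut m n (replayFwd1 C t1 t2 y s1' j) (replayFwd2 C t1 t2 y s2' j) = y j :=
    forall_fwdOut_eq_iff.1 fun j hj => (h j hj).symm
  refine forall_fwdOut_eq_iff.2 fun j hj => ?_
  obtain ⟨-, h₂⟩ := (chOut_inj hmn).1 ((hy' j hj).trans (hy j hj).symm)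
  rw [h₂]
  exact hy j hj

lemma recvF_eq_recvF_iff {s1 s2 s1' s2' : Fin C.K → ZMod 2}
    {t1 t2 t1' t2' : Fin C.Kt → ZMod 2} :
    recvF1 C s1 s2 t1 t2 = recvF1 C s1' s2' t1' t2' ∧
        recvF2 C s1 s2 t1 t2 = recvF2 C s1' s2' t1' t2' ↔
      ∀ j < C.N, fwdOut C s1 s2 t1 t2 j = fwdOut C s1' s2' t1' t2' j := by
  simp only [funext_iff, ← forall_and, Fin.forall_iff, Prod.ext_iff, recvF1, recvF2,
    hist_apply_s4]
  rfl

end TwoWay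

open TwoWay FinInfo in
/-- Lemma 2: in the four-node ADT network with `m ≠ n`, under the uniform source
distribution, the forward sources `S₁^K` and `S₂^K` are conditionally independent
given `(Y₁^N, Y₂^N, S̃₁^K̃, S̃₂^K̃)`:
`I(S₁^K ; S₂^K | Y₁^N, Y₂^N, S̃₁^K̃, S̃₂^K̃) = 0`. -/
theorem lemma2 (m n mt nt : ℕ) (hmn : m ≠ n) (C : Code m n mt nt) :
    condMutualInfo (fun _ : SrcSpace C => (Fintype.card (SrcSpace C) : ℝ)⁻¹)
      (fun ω => ω.1) (fun ω => ω.2.1)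
      (fun ω => (recvF1 C ω.1 ω.2.1 ω.2.2.1 ω.2.2.2,
                 recvF2 C ω.1 ω.2.1 ω.2.2.1 ω.2.2.2,
                 ω.2.2.1, ω.2.2.2)) = 0 := by
  refine condMutualInfo_const_eq_zero_of_exchange ?_ ?_ _
  · rintro ⟨s1, s2, t1, t2⟩ ⟨s1', s2', t1', t2'⟩ hZ
    simp only [Prod.mk.injEq] at hZ
    obtain ⟨h₁, h₂, rfl, rfl⟩ := hZ
    obtain ⟨e₁, e₂⟩ :=
      recvF_eq_recvF_iff.2 (fwdOut_exchange hmn (recvF_eq_recvF_iff.1 ⟨h₁, h₂⟩))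
    exact ⟨(s1, s2', t1, t2), rfl, rfl, by rw [e₁, e₂]⟩
  · rintro ⟨s1, s2, t1, t2⟩ ⟨s1', s2', t1', t2'⟩ rfl rfl hZ
    simp only [Prod.mk.injEq] at hZ
    obtain ⟨-, -, rfl, rfl⟩ := hZ
    rfl
end

section
/- Let m ≠ n be natural numbers, q = max(m,n), and let G be the q×q shift matrix over 𝔽₂ with (i,j) entry 1 iff i = j+1. Then the linear map 𝔽₂^q × 𝔽₂^q → 𝔽₂^q × 𝔽₂^q given by (X₁, X₂) ↦ (G^{q−n}X₁ + G^{q−m}X₂, G^{q−m}X₁ + G^{q−n}X₂) is injective; in particular (X₁, X₂) is uniquely determined by (Y₁, Y₂) = (G^{q−n}X₁ + G^{q−m}X₂, G^{q−m}X₁ + G^{q−n}X₂). -/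
open Matrix

/-- The `q × q` shift matrix over `𝔽₂`: entry `(i,j)` is `1` iff `i = j + 1`. -/
def shiftG (q : ℕ) : Matrix (Fin q) (Fin q) (ZMod 2) :=
  Matrix.of fun i j => if (i : ℕ) = (j : ℕ) + 1 then 1 else 0

lemma shiftG_pow_apply (q k : ℕ) (i j : Fin q) :
    (shiftG q ^ k) i j = if (i : ℕ) = (j : ℕ) + k then 1 else 0 := by
  induction k generalizing i j with
  | zero =>
    simp [Matrix.one_apply, Fin.ext_iff]
  | succ k ih =>
    rw [pow_succ, Matrix.mul_apply]
    simp only [ih]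
    rcases Nat.lt_or_ge ((j : ℕ) + 1) q with h | h
    · rw [Finset.sum_eq_single (⟨(j : ℕ) + 1, h⟩ : Fin q)]
      · simp [shiftG, add_assoc, add_comm 1 k]
      · intro b _ hb
        have : (b : ℕ) ≠ (j : ℕ) + 1 := fun hc => hb (Fin.ext hc)
        simp [shiftG, this]
      · simp
    · have h1 : ∀ b : Fin q, (b : ℕ) ≠ (j : ℕ) + 1 := fun b hb =>
        absurd (hb ▸ b.isLt) (not_lt.mpr h)
      have h2 : (i : ℕ) ≠ (j : ℕ) + (k + 1) := by
        intro hc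
        have := i.isLt
        omega
      simp [shiftG, h1, h2]

lemma shiftG_nilpotent (q : ℕ) : IsNilpotent (shiftG q) := by
  refine ⟨q, ?_⟩
  ext i j
  rw [shiftG_pow_apply]
  have : (i : ℕ) ≠ (j : ℕ) + q := by have := i.isLt; omega
  simp [this]

/-- Key lemma: for a nilpotent `G` and `b ≥ 1`,
`(X₁, X₂) ↦ (X₁ + G^b X₂, G^b X₁ + X₂)` is injective. -/
lemma key {q : ℕ} {G : Matrix (Fin q) (Fin q) (ZMod 2)} (hG : IsNilpotent G)
    {b : ℕ} (hb : 0 < b) :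
    Function.Injective
      (fun X : (Fin q → ZMod 2) × (Fin q → ZMod 2) =>
        (X.1 + G ^ b *ᵥ X.2, G ^ b *ᵥ X.1 + X.2)) := by
  have hnil : IsNilpotent (G ^ b * G ^ b) := by
    obtain ⟨k, hk⟩ := hG
    refine ⟨k, ?_⟩
    rw [← pow_add, ← pow_mul, mul_comm, pow_mul, hk, zero_pow (by omega)]
  have hunit : IsUnit ((1 : Matrix (Fin q) (Fin q) (ZMod 2)) - G ^ b * G ^ b) :=
    hnil.isUnit_one_sub
  have hinj := Matrix.mulVec_injective_iff_isUnit.mpr hunit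
  intro X Y h
  simp only [Prod.mk.injEq] at h
  obtain ⟨h1, h2⟩ := h
  have hA1 : G ^ b *ᵥ X.1 - G ^ b *ᵥ Y.1 = Y.2 - X.2 := by
    linear_combination (norm := abel) h2
  have hA2 : G ^ b *ᵥ Y.2 - G ^ b *ᵥ X.2 = X.1 - Y.1 := by
    linear_combination (norm := abel) -h1
  have e3 : ((1 : Matrix (Fin q) (Fin q) (ZMod 2)) - G ^ b * G ^ b) *ᵥ X.1
      = ((1 : Matrix (Fin q) (Fin q) (ZMod 2)) - G ^ b * G ^ b) *ᵥ Y.1 := by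
    rw [Matrix.sub_mulVec, Matrix.sub_mulVec, Matrix.one_mulVec, Matrix.one_mulVec,
      ← Matrix.mulVec_mulVec, ← Matrix.mulVec_mulVec]
    have hmid : G ^ b *ᵥ (G ^ b *ᵥ X.1) - G ^ b *ᵥ (G ^ b *ᵥ Y.1) = X.1 - Y.1 := by
      rw [← Matrix.mulVec_sub, hA1, Matrix.mulVec_sub, hA2]
    linear_combination (norm := abel) -hmid
  have h1' : X.1 = Y.1 := hinj e3
  have h2' : X.2 = Y.2 := by
    have : Y.2 - X.2 = 0 := by rw [← hA1, h1', sub_self]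
    have := sub_eq_zero.mp this
    exact this.symm
  exact Prod.ext h1' h2'

/-- Claim 1: for `m ≠ n`, the linear map
`(X₁, X₂) ↦ (G^{q-n} X₁ + G^{q-m} X₂, G^{q-m} X₁ + G^{q-n} X₂)` (with `q = max m n`)
is injective, i.e. `(X₁, X₂)` is uniquely determined by `(Y₁, Y₂)`. -/
theorem claim1 (m n : ℕ) (hmn : m ≠ n) :
    Function.Injective
      (fun X : (Fin (max m n) → ZMod 2) × (Fin (max m n) → ZMod 2) =>
        (shiftG (max m n) ^ (max m n - n) *ᵥ X.1 + shiftG (max m n) ^ (max m n - m) *ᵥ X.2,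
         shiftG (max m n) ^ (max m n - m) *ᵥ X.1 + shiftG (max m n) ^ (max m n - n) *ᵥ X.2)) := by
  set q := max m n with hq
  rcases Nat.lt_or_ge m n with hlt | hge
  · have ha : q - n = 0 := by omega
    have hb : 0 < q - m := by omega
    have hkey := key (shiftG_nilpotent q) hb
    intro X Y h
    apply hkey
    simpa [ha, Matrix.one_mulVec] using h
  · have hlt : n < m := lt_of_le_of_ne hge (Ne.symm hmn)
    have ha : q - m = 0 := by omega
    have hb : 0 < q - n := by omega
    have hkey := key (shiftG_nilpotent q) hb
    intro X Y h
    simp only [Prod.mk.injEq] at h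
    apply hkey
    simp only [ha, pow_zero, Matrix.one_mulVec] at h ⊢
    exact Prod.mk.injEq _ _ _ _ ▸ ⟨h.2, h.1⟩
end
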